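/- arXiv:1805.05429 — 5 statements merged into one kernel-verified Lean document; each statement's English description precedes it below -/
import Mathlib

section
/- Let C be a linear code of length n over F_{q^m}. Then the dual (over F_q) of the subfield subcode C ∩ F_q^n equals the trace code Tr_{F_{q^m}/F_q}(C^⊥), where the trace map is applied componentwise. -/
/-!
For `c ∈ F_q^n` and `v ∈ F_{q^m}^n` one has `Tr(v) · c = Tr(v · c)`. Since `C^⊥` is closed
under scaling by `F_{q^m}` and the trace form is nondegenerate, `c` is orthogonal to all of
`Tr(C^⊥)` iff `v · c = 0` for every `v ∈ C^⊥`, i.e. iff `c ∈ C^⊥⊥ = C`. So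
`Tr(C^⊥)^⊥ = C ∩ F_q^n`, and taking orthogonals once more gives the theorem.
-/

/-- The dual of a set of words, with respect to the standard bilinear form. -/
def dualSet (F : Type*) [Field F] {ι : Type*} [Fintype ι] (S : Set (ι → F)) : Set (ι → F) :=
  {u | ∀ c ∈ S, ∑ i, u i * c i = 0}

open LinearMap (BilinForm)

section DotProduct

abbrev dotForm (R ι : Type*) [CommRing R] [Fintype ι] : BilinForm R (ι → R) :=
  dotProductBilin R R

variable {R ι : Type*} [CommRing R] [Fintype ι]

lemma dotForm_isRefl : (dotForm R ι).IsRefl := fun u c h => by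
  simpa [dotProduct_comm] using h

lemma dotForm_nondegenerate [DecidableEq ι] : (dotForm R ι).Nondegenerate := by
  refine (dotForm_isRefl (R := R) (ι := ι)).nondegenerate_iff_separatingLeft.mpr fun u h => ?_
  exact funext fun j => by simpa using h (Pi.single j 1)

lemma dualSet_eq_orthogonal {F : Type*} [Field F] (W : Submodule F (ι → F)) :
    dualSet F W = ((dotForm F ι).orthogonal W : Set (ι → F)) := by
  ext u
  simp only [dualSet, SetLike.mem_coe, BilinForm.mem_orthogonal_iff, dotProductBilin_apply_apply]
  exact forall₂_congr fun c _ => by rw [dotProduct_comm, dotProduct]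

end DotProduct

section TraceCode

variable (R : Type*) {S ι : Type*} [CommRing R] [CommRing S] [Algebra R S]

def subfieldSubcode (C : Submodule S (ι → S)) : Submodule R (ι → R) :=
  (C.restrictScalars R).comap ((Algebra.linearMap R S).compLeft ι)

noncomputable def traceCode (D : Submodule S (ι → S)) : Submodule R (ι → R) :=
  (D.restrictScalars R).map ((Algebra.trace R S).compLeft ι)

variable {R}

lemma mem_subfieldSubcode {C : Submodule S (ι → S)} {c : ι → R} :
    c ∈ subfieldSubcode R C ↔ algebraMap R S ∘ c ∈ C :=
  Iff.rfl

lemma mem_traceCode {D : Submodule S (ι → S)} {u : ι → R} :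
    u ∈ traceCode R D ↔ ∃ v ∈ D, Algebra.trace R S ∘ v = u :=
  Iff.rfl

lemma trace_dotProduct_algebraMap_comp [Fintype ι] (v : ι → S) (c : ι → R) :
    Algebra.trace R S (v ⬝ᵥ algebraMap R S ∘ c) = (Algebra.trace R S ∘ v) ⬝ᵥ c := by
  simp only [dotProduct, Function.comp_apply, map_sum, mul_comm (v _), ← Algebra.smul_def,
    map_smul, smul_eq_mul, mul_comm (c _)]

variable {K L : Type*} [Field K] [Field L] [Algebra K L] [FiniteDimensional K L]
  [Algebra.IsSeparable K L] [Fintype ι]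

theorem orthogonal_traceCode (D : Submodule L (ι → L)) :
    (dotForm K ι).orthogonal (traceCode K D) =
      subfieldSubcode K ((dotForm L ι).orthogonal D) := by
  ext c
  simp only [mem_subfieldSubcode, BilinForm.mem_orthogonal_iff, mem_traceCode,
    forall_exists_index, and_imp, forall_apply_eq_imp_iff₂, dotProductBilin_apply_apply,
    ← trace_dotProduct_algebraMap_comp]
  refine ⟨fun h v hv => (traceForm_nondegenerate K L).1 _ fun a => ?_,
    fun h v hv => by rw [h v hv, map_zero]⟩
  rw [Algebra.traceForm_apply, mul_comm, ← smul_eq_mul, ← smul_dotProduct]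
  exact h _ (D.smul_mem a hv)

theorem orthogonal_subfieldSubcode [DecidableEq ι] (C : Submodule L (ι → L)) :
    (dotForm K ι).orthogonal (subfieldSubcode K C) =
      traceCode K ((dotForm L ι).orthogonal C) := by
  rw [← (dotForm K ι).orthogonal_orthogonal dotForm_nondegenerate dotForm_isRefl (traceCode K _),
    orthogonal_traceCode, (dotForm L ι).orthogonal_orthogonal dotForm_nondegenerate dotForm_isRefl]

end TraceCode

theorem delsarte_general {K L : Type*} [Field K] [Field L] [Fintype L] [Algebra K L]
    {n : ℕ} (Co : Submodule L (Fin n → L)) :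
    dualSet K {c : Fin n → K | (fun i => algebraMap K L (c i)) ∈ Co} =
      {u : Fin n → K | ∃ v ∈ dualSet L (Co : Set (Fin n → L)),
        u = fun i => Algebra.trace K L (v i)} := by
  have : Finite K := Finite.of_injective _ (algebraMap K L).injective
  have : Module.Finite K L := Module.Finite.of_finite
  have hsub : {c : Fin n → K | (fun i => algebraMap K L (c i)) ∈ Co} = subfieldSubcode K Co :=
    rfl
  rw [hsub, dualSet_eq_orthogonal, orthogonal_subfieldSubcode, dualSet_eq_orthogonal]
  ext u
  exact exists_congr fun v => and_congr_right' eq_comm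

/-- **Delsarte's theorem**: the dual (over `K`) of the subfield subcode `C ∩ K^n` of an
`L`-linear code `C ⊆ L^n` is the componentwise trace of the dual of `C`. -/
theorem delsarte {K L : Type*} [Field K] [Fintype K] [Field L] [Fintype L] [Algebra K L]
    {n : ℕ} (Co : Submodule L (Fin n → L)) :
    dualSet K {c : Fin n → K | (fun i => algebraMap K L (c i)) ∈ Co} =
      {u : Fin n → K | ∃ v ∈ dualSet L (Co : Set (Fin n → L)),
        u = fun i => Algebra.trace K L (v i)} :=
  delsarte_general Co
end

section
/- Let x ∈ F_{q^m}^n be a vector with pairwise distinct entries (a support) and y ∈ F_{q^m}^n a vector with all nonzero entries (a multiplier), and let k ≤ n. Then the dual of GRS_k(x,y) is GRS_{n-k}(x, y^⊥), where y^⊥_i = 1/(π'_x(x_i) y_i) and π_x(z) = ∏_{j=1}^n (z - x_j). -/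
/-
By Lagrange interpolation, for every `h` of degree `< n` the sum `∑ h(x_i) / π'_x(x_i)` is the
coefficient of `X^(n-1)` in `h`. The pairing of `(y^⊥_i g(x_i))` with `(y_i f(x_i))` is this sum
for `h = g f`, so it vanishes when `deg g < n - k` and `deg f < k`. Conversely, every word has the
form `(y^⊥_i g(x_i))` with `deg g < n`, and pairing it with the words of `f = X^t`, `t < k`,
kills the top `k` coefficients of `g`, from the top down.
-/

open Polynomial

/-- The generalised Reed–Solomon code with support `x` and multiplier `y`, of dimension `k`:
evaluations of polynomials of degree `< k`, scaled by `y`. -/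
def GRSset (L : Type*) [Field L] {ι : Type*} (k : ℕ) (x y : ι → L) : Set (ι → L) :=
  {v | ∃ f ∈ Polynomial.degreeLT L k, v = fun i => y i * Polynomial.eval (x i) f}

open Finset Lagrange

namespace Polynomial

variable {R : Type*} [Semiring R]

theorem mul_mem_degreeLT_sub_one {f g : R[X]} {m k : ℕ} (hg : g ∈ degreeLT R (m - k))
    (hf : f ∈ degreeLT R k) : g * f ∈ degreeLT R (m - 1) := by
  rw [mem_degreeLT, degree_lt_iff_coeff_zero] at *
  intro j hj
  rw [coeff_mul]
  refine sum_eq_zero fun ⟨a, b⟩ hab => ?_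
  rw [HasAntidiagonal.mem_antidiagonal] at hab
  by_cases ha : m - k ≤ a
  · simp [hg a ha]
  · simp [hf b (by omega)]

theorem X_pow_mem_degreeLT {t k : ℕ} (h : t < k) : (X ^ t : R[X]) ∈ degreeLT R k :=
  mem_degreeLT.2 ((degree_X_pow_le t).trans_lt (by exact_mod_cast h))

theorem mem_degreeLT_of_coeff_eq_zero {g : R[X]} {n : ℕ} (hg : g ∈ degreeLT R (n + 1))
    (hn : g.coeff n = 0) : g ∈ degreeLT R n := by
  rw [mem_degreeLT, degree_lt_iff_coeff_zero] at *
  intro j hj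
  rcases hj.eq_or_lt with rfl | hj
  · exact hn
  · exact hg j hj

/-- `h` is only asked for where `g * X ^ t` already has degree `< n`, which the induction
provides and which is all that `∑ h(x_i) / π'_x(x_i) = h.coeff (n - 1)` can use. -/
theorem mem_degreeLT_sub_of_coeff_mul_X_pow_eq_zero {g : R[X]} {n k : ℕ}
    (hg : g ∈ degreeLT R n)
    (h : ∀ t < k, g * X ^ t ∈ degreeLT R n → (g * X ^ t).coeff (n - 1) = 0) :
    g ∈ degreeLT R (n - k) := by
  induction k with
  | zero => simpa using hg
  | succ t ih =>
    have hgt : g ∈ degreeLT R (n - t) := ih fun s hs => h s (by omega)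
    rcases le_or_gt n t with hnt | htn
    · rwa [show n - (t + 1) = n - t by omega]
    have hgX : g * X ^ t ∈ degreeLT R n := by
      simpa using mul_mem_degreeLT_sub_one (m := n + 1) (k := t + 1) (by simpa using hgt)
        (X_pow_mem_degreeLT t.lt_succ_self)
    refine mem_degreeLT_of_coeff_eq_zero (by rwa [show n - (t + 1) + 1 = n - t by omega]) ?_
    simpa [coeff_mul_X_pow', show t ≤ n - 1 by omega, show n - 1 - t = n - (t + 1) by omega]
      using h t t.lt_succ_self hgX

end Polynomial

namespace Lagrange

variable {F : Type*} [Field F] {ι : Type*} [DecidableEq ι] {s : Finset ι} {v : ι → F}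

theorem coeff_eq_sum_div_eval_derivative_nodal (hvs : Set.InjOn v s) {P : F[X]}
    (hP : P.degree < #s) :
    P.coeff (#s - 1) = ∑ i ∈ s, P.eval (v i) / (derivative (nodal s v)).eval (v i) := by
  rw [coeff_eq_sum hvs hP]
  refine sum_congr rfl fun i hi => ?_
  rw [eval_nodal_derivative_eval_node_eq hi, eval_nodal]

theorem eval_derivative_nodal_ne_zero (hvs : Set.InjOn v s) {i : ι} (hi : i ∈ s) :
    (derivative (nodal s v)).eval (v i) ≠ 0 := by
  simpa [nodalWeight_eq_eval_derivative_nodal hi] using nodalWeight_ne_zero hvs hi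

end Lagrange

theorem GRSset_card_eq_univ {L : Type*} [Field L] {ι : Type*} [Fintype ι] {x c : ι → L}
    (hx : Function.Injective x) (hc : ∀ i, c i ≠ 0) :
    GRSset L (Fintype.card ι) x c = Set.univ := by
  classical
  refine Set.eq_univ_of_forall fun u => ⟨interpolate univ x fun i => u i / c i, ?_, ?_⟩
  · rw [mem_degreeLT, ← card_univ]
    exact degree_interpolate_lt _ hx.injOn
  · funext i
    rw [eval_interpolate_at_node _ hx.injOn (mem_univ i), mul_div_cancel₀ _ (hc i)]

theorem dual_GRS_general {L : Type*} [Field L] {n k : ℕ} (x y : Fin n → L)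
    (hx : Function.Injective x) (hy : ∀ i, y i ≠ 0) :
    dualSet L (GRSset L k x y) =
      GRSset L (n - k) x (fun i =>
        (Polynomial.eval (x i)
            (Polynomial.derivative (∏ j, (X - Polynomial.C (x j)))) * y i)⁻¹) := by
  rw [← nodal_eq]
  set π' := derivative (nodal univ x)
  have hπ' : ∀ i, π'.eval (x i) ≠ 0 := fun i =>
    eval_derivative_nodal_ne_zero hx.injOn (mem_univ i)
  have weighted_sum : ∀ h ∈ degreeLT L n, ∑ i, h.eval (x i) / π'.eval (x i) = h.coeff (n - 1) :=
    fun h hh => by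
      simpa using (coeff_eq_sum_div_eval_derivative_nodal hx.injOn (s := univ)
        (by simpa using mem_degreeLT.1 hh)).symm
  have pairing : ∀ g f : L[X], ∑ i, (π'.eval (x i) * y i)⁻¹ * g.eval (x i) * (y i * f.eval (x i))
      = ∑ i, (g * f).eval (x i) / π'.eval (x i) := fun g f =>
    sum_congr rfl fun i _ => by
      rw [eval_mul]
      field_simp [hy i]
  ext u
  constructor
  · intro hu
    obtain ⟨g, hg, rfl⟩ : u ∈ GRSset L n x fun i => (π'.eval (x i) * y i)⁻¹ := by
      simpa only [Fintype.card_fin] using Set.eq_univ_iff_forall.1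
        (GRSset_card_eq_univ hx fun i => inv_ne_zero (mul_ne_zero (hπ' i) (hy i))) u
    refine ⟨g, mem_degreeLT_sub_of_coeff_mul_X_pow_eq_zero hg fun t ht hgt => ?_, rfl⟩
    rw [← weighted_sum _ hgt, ← pairing]
    exact hu _ ⟨X ^ t, X_pow_mem_degreeLT ht, rfl⟩
  · rintro ⟨g, hg, rfl⟩ _ ⟨f, hf, rfl⟩
    have hgf := mul_mem_degreeLT_sub_one hg hf
    rw [pairing, weighted_sum _ (degreeLT_mono (n.sub_le 1) hgf)]
    exact coeff_eq_zero_of_degree_lt (mem_degreeLT.1 hgf)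

/-- The dual of `GRS_k(x, y)` is `GRS_{n-k}(x, y^⊥)` with
`y^⊥ i = 1 / (π'_x(x_i) * y_i)` where `π_x = ∏ (z - x_j)`. -/
theorem dual_GRS {L : Type*} [Field L] {n k : ℕ} (x y : Fin n → L)
    (hx : Function.Injective x) (hy : ∀ i, y i ≠ 0) (hk : k ≤ n) :
    dualSet L (GRSset L k x y) =
      GRSset L (n - k) x (fun i =>
        (Polynomial.eval (x i)
            (Polynomial.derivative (∏ j, (X - Polynomial.C (x j)))) * y i)⁻¹) :=
  dual_GRS_general x y hx hy
end

section
/- Let x ∈ F_{q^m}^n be a support, y, y' ∈ F_{q^m}^n multipliers, and k, k' positive integers with k + k' - 1 ≤ n. Then the Schur product of GRS_k(x,y) and GRS_{k'}(x,y') equals GRS_{k+k'-1}(x, y⋆y'). -/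
open Polynomial

/-- Evaluation map sending `f` to `fun i => y i * f.eval (x i)` as a linear map. -/
def evMap {L : Type*} [Field L] {n : ℕ} (x y : Fin n → L) : L[X] →ₗ[L] (Fin n → L) where
  toFun f := fun i => y i * f.eval (x i)
  map_add' f g := by funext i; simp [mul_add]
  map_smul' c f := by funext i; simp [smul_eq_mul]; ring

theorem GRS_eq {L : Type*} [Field L] {n : ℕ} (k : ℕ) (x y : Fin n → L) :
    GRSset L k x y = ↑(Submodule.map (evMap x y) (Polynomial.degreeLT L k)) := by
  ext v
  constructor
  · rintro ⟨f, hf, rfl⟩; exact ⟨f, hf, rfl⟩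
  · rintro ⟨f, hf, rfl⟩; exact ⟨f, hf, rfl⟩

/-- The Schur product (componentwise product) of `GRS_k(x,y)` and `GRS_{k'}(x,y')` is
`GRS_{k+k'-1}(x, y ⋆ y')`.  The Schur product of two codes is the span of all
componentwise products. -/
theorem schur_product_GRS {L : Type*} [Field L] {n : ℕ} (x y y' : Fin n → L)
    (hx : Function.Injective x) (hy : ∀ i, y i ≠ 0) (hy' : ∀ i, y' i ≠ 0)
    {k k' : ℕ} (hk : 1 ≤ k) (hk' : 1 ≤ k') (hkk : k + k' - 1 ≤ n) :
    (Submodule.span L (Set.image2 (· * ·) (GRSset L k x y) (GRSset L k' x y')) :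
        Set (Fin n → L)) =
      GRSset L (k + k' - 1) x (y * y') := by
  classical
  set N := Submodule.span L (Set.image2 (· * ·) (GRSset L k x y) (GRSset L k' x y')) with hN
  have main : ∀ p ∈ Polynomial.degreeLT L (k + k' - 1), evMap x (y * y') p ∈ N := by
    intro p hp
    rw [degreeLT_eq_span_X_pow] at hp
    refine Submodule.span_induction ?_ ?_ ?_ ?_ hp
    · rintro q hq
      simp only [Finset.coe_image, Set.mem_image, Finset.mem_coe, Finset.mem_range] at hq
      obtain ⟨j, hj, rfl⟩ := hq
      set a := min j (k - 1) with ha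
      set b := j - a with hb
      have hab : a + b = j := by omega
      apply Submodule.subset_span
      refine ⟨fun i => y i * (x i) ^ a, ⟨X ^ a, ?_, by funext i; simp⟩,
             fun i => y' i * (x i) ^ b, ⟨X ^ b, ?_, by funext i; simp⟩, ?_⟩
      · rw [mem_degreeLT, degree_X_pow]
        exact_mod_cast (by omega : a < k)
      · rw [mem_degreeLT, degree_X_pow]
        exact_mod_cast (by omega : b < k')
      · funext i
        simp only [evMap, LinearMap.coe_mk, AddHom.coe_mk, Pi.mul_apply, eval_pow, eval_X]
        rw [← hab]; ring
    · rw [map_zero]; exact Submodule.zero_mem N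
    · intro p q _ _ hpv hqv
      rw [map_add]; exact Submodule.add_mem N hpv hqv
    · intro c p _ hpv
      rw [map_smul]; exact Submodule.smul_mem N c hpv
  rw [GRS_eq (k + k' - 1) x (y * y')]
  refine congrArg _ (le_antisymm ?_ ?_)
  · rw [Submodule.span_le]
    rintro v ⟨a, ⟨f, hf, rfl⟩, b, ⟨g, hg, rfl⟩, rfl⟩
    refine ⟨f * g, ?_, ?_⟩
    · rw [SetLike.mem_coe, mem_degreeLT]; rw [mem_degreeLT] at hf hg
      rcases eq_or_ne f 0 with rfl | hf0
      · simpa using (by exact_mod_cast WithBot.bot_lt_coe (k + k' - 1))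
      rcases eq_or_ne g 0 with rfl | hg0
      · simpa using (by exact_mod_cast WithBot.bot_lt_coe (k + k' - 1))
      rw [degree_mul, degree_eq_natDegree hf0, degree_eq_natDegree hg0] at *
      have h1 : f.natDegree < k := by exact_mod_cast hf
      have h2 : g.natDegree < k' := by exact_mod_cast hg
      have : f.natDegree + g.natDegree < k + k' - 1 := by omega
      exact_mod_cast this
    · funext i
      simp [evMap, Pi.mul_apply]; ring
  · rintro v ⟨f, hf, rfl⟩
    exact main f hf
end

section
/- Let x, y ∈ F_{q^2}^n be a support and multiplier over the quadratic extension F_{q^2}/F_q, and let r' ≥ r be positive integers. Then (RS_{r'-r+1}(x) ∩ F_q^n) ⋆ Alt_{r'}(x,y) ⊆ Alt_r(x,y); equivalently RS_{r'-r+1}(x) ∩ F_q^n is contained in the conductor of Alt_{r'}(x,y) into Alt_r(x,y). -/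
open Polynomial

/-- The alternant code `Alt_r(x,y) = GRS_r(x,y)^⊥ ∩ K^n`. -/
def AltSet (K L : Type*) [Field K] [Field L] [Algebra K L] {ι : Type*} [Fintype ι]
    (r : ℕ) (x y : ι → L) : Set (ι → K) :=
  {c | (fun i => algebraMap K L (c i)) ∈ dualSet L (GRSset L r x y)}

/-- For a quadratic extension `L/K` (`L = F_{q²}`, `K = F_q`), the subfield subcode
`RS_{r'-r+1}(x) ∩ K^n` is contained in the conductor of `Alt_{r'}(x,y)` into
`Alt_r(x,y)`: any such word times (componentwise) any word of `Alt_{r'}(x,y)`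
lies in `Alt_r(x,y)`. -/
theorem rs_schur_alternant {K L : Type*} [Field K] [Fintype K] [Field L] [Fintype L]
    [Algebra K L] (h2 : Module.finrank K L = 2) {n r r' : ℕ} (x y : Fin n → L)
    (hx : Function.Injective x) (hy : ∀ i, y i ≠ 0) (hr : 1 ≤ r) (hrr' : r ≤ r') :
    ∀ u : Fin n → K, (fun i => algebraMap K L (u i)) ∈ GRSset L (r' - r + 1) x 1 →
      ∀ d ∈ AltSet K L r' x y, u * d ∈ AltSet K L r x y := by
  rintro u ⟨f, hf, hu⟩ d hd
  rintro c ⟨g, hg, rfl⟩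
  rw [Polynomial.mem_degreeLT] at hf hg
  have key : (fun i => y i * Polynomial.eval (x i) (f * g)) ∈ GRSset L r' x y := by
    refine ⟨f * g, ?_, rfl⟩
    rw [Polynomial.mem_degreeLT]
    by_cases hf0 : f = 0
    · simp only [hf0, zero_mul, Polynomial.degree_zero]; exact WithBot.bot_lt_coe _
    by_cases hg0 : g = 0
    · simp only [hg0, mul_zero, Polynomial.degree_zero]; exact WithBot.bot_lt_coe _
    have h1 : f.natDegree < r' - r + 1 := (Polynomial.natDegree_lt_iff_degree_lt hf0).mpr hf
    have h2 : g.natDegree < r := (Polynomial.natDegree_lt_iff_degree_lt hg0).mpr hg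
    calc (f * g).degree ≤ (f.natDegree + g.natDegree : ℕ) := by
          refine (Polynomial.degree_mul_le _ _).trans ?_
          push_cast
          exact add_le_add (Polynomial.degree_le_natDegree) (Polynomial.degree_le_natDegree)
      _ < (r' : WithBot ℕ) := by exact_mod_cast by omega
  have hzero := hd _ key
  have hui : ∀ i, algebraMap K L (u i) = Polynomial.eval (x i) f := by
    intro i
    have := congrFun hu i
    simpa using this
  calc ∑ i, algebraMap K L ((u * d) i) * (y i * Polynomial.eval (x i) g)
      = ∑ i, algebraMap K L (d i) * (y i * Polynomial.eval (x i) (f * g)) := by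
        refine Finset.sum_congr rfl fun i _ => ?_
        simp [Pi.mul_apply, map_mul, hui i]
        ring
    _ = 0 := hzero
end

section
/- Let x ∈ F_{q^2}^n be a support. The F_{q^2}-linear span of the norm–trace code NT(x) = span_{F_q}{1, Tr(x), Tr(αx), N(x)} equals span_{F_{q^2}}{1, x, x^{⋆q}, x^{⋆(q+1)}}, where x^{⋆j} = (x_i^j)_i. -/
/-- The `F_{q²}`-linear span of the norm–trace code
`NT(x) = span_{F_q}{1, Tr(x), Tr(αx), N(x)}` equals
`span_{F_{q²}}{1, x, x^{⋆q}, x^{⋆(q+1)}}`.  Here `L = F_{q²}`, `K = F_q`,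
`Tr(a) = a + a^q`, `N(a) = a^{q+1}`, and `α ∈ L` satisfies `Tr(α) = 1` with
`α ∉ F_q` (so that `(1, α)` is an `F_q`-basis of `L`). -/
theorem NT_tensor_span {K L : Type*} [Field K] [Fintype K] [Field L] [Fintype L] [Algebra K L]
    (hL : Fintype.card L = Fintype.card K ^ 2) {n : ℕ} (x : Fin n → L)
    (hx : Function.Injective x) (α : L) (hα : α + α ^ Fintype.card K = 1)
    (hα' : α ^ Fintype.card K ≠ α) :
    Submodule.span L ({(1 : Fin n → L),
        fun i => x i + x i ^ Fintype.card K,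
        fun i => α * x i + (α * x i) ^ Fintype.card K,
        fun i => x i ^ (Fintype.card K + 1)} : Set (Fin n → L)) =
      Submodule.span L ({(1 : Fin n → L), x,
        fun i => x i ^ Fintype.card K,
        fun i => x i ^ (Fintype.card K + 1)} : Set (Fin n → L)) := by
  classical
  set q := Fintype.card K with hq
  set y : Fin n → L := fun i => x i ^ q with hy
  set e : Fin n → L := fun i => x i ^ (q + 1) with he
  have hβ : α ^ q = 1 - α := by linear_combination hα
  have htr : (fun i => x i + x i ^ q) = x + y := rfl
  have htrα : (fun i => α * x i + (α * x i) ^ q) = α • x + (1 - α) • y := by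
    funext i
    simp only [Pi.add_apply, Pi.smul_apply, smul_eq_mul, hy, mul_pow, hβ]
  have hd : (α - (1 - α)) ≠ 0 := by
    intro h
    apply hα'
    rw [hβ]
    linear_combination -h
  rw [htr, htrα]
  apply le_antisymm
  · rw [Submodule.span_le]
    intro v hv
    simp only [Set.mem_insert_iff, Set.mem_singleton_iff] at hv
    have h1 : (1 : Fin n → L) ∈ Submodule.span L ({(1 : Fin n → L), x, y, e} : Set (Fin n → L)) :=
      Submodule.subset_span (by simp)
    have h2 : x ∈ Submodule.span L ({(1 : Fin n → L), x, y, e} : Set (Fin n → L)) :=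
      Submodule.subset_span (by simp)
    have h3 : y ∈ Submodule.span L ({(1 : Fin n → L), x, y, e} : Set (Fin n → L)) :=
      Submodule.subset_span (by simp)
    have h4 : e ∈ Submodule.span L ({(1 : Fin n → L), x, y, e} : Set (Fin n → L)) :=
      Submodule.subset_span (by simp)
    rcases hv with rfl | rfl | rfl | rfl
    · exact h1
    · exact Submodule.add_mem _ h2 h3
    · exact Submodule.add_mem _ (Submodule.smul_mem _ _ h2) (Submodule.smul_mem _ _ h3)
    · exact h4
  · rw [Submodule.span_le]
    intro v hv
    simp only [Set.mem_insert_iff, Set.mem_singleton_iff] at hv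
    set S : Set (Fin n → L) := {(1 : Fin n → L), x + y, α • x + (1 - α) • y, e} with hS
    have h1 : (1 : Fin n → L) ∈ Submodule.span L S := Submodule.subset_span (by simp [hS])
    have h2 : x + y ∈ Submodule.span L S := Submodule.subset_span (by simp [hS])
    have h3 : α • x + (1 - α) • y ∈ Submodule.span L S := Submodule.subset_span (by simp [hS])
    have h4 : e ∈ Submodule.span L S := Submodule.subset_span (by simp [hS])
    have hxmem : x ∈ Submodule.span L S := by
      have hm : (α - (1 - α))⁻¹ • ((α • x + (1 - α) • y) - (1 - α) • (x + y)) ∈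
          Submodule.span L S :=
        Submodule.smul_mem _ _ (Submodule.sub_mem _ h3 (Submodule.smul_mem _ _ h2))
      convert hm using 1
      funext i
      simp only [Pi.smul_apply, Pi.add_apply, Pi.sub_apply, smul_eq_mul]
      field_simp
      ring
    have hymem : y ∈ Submodule.span L S := by
      have hm : (α - (1 - α))⁻¹ • (α • (x + y) - (α • x + (1 - α) • y)) ∈
          Submodule.span L S :=
        Submodule.smul_mem _ _ (Submodule.sub_mem _ (Submodule.smul_mem _ _ h2) h3)
      convert hm using 1
      funext i
      simp only [Pi.smul_apply, Pi.add_apply, Pi.sub_apply, smul_eq_mul]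
      field_simp
      ring
    rcases hv with rfl | rfl | rfl | rfl
    · exact h1
    · exact hxmem
    · exact hymem
    · exact h4
end
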